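/- Let β be an algebraic integer of degree n ≥ 5 over ℚ with conjugates β_1, …, β_n, and suppose Gal(ℚ(β_1,…,β_n)/ℚ) = 𝔄_n. Let a_1, …, a_n ∈ ℤ, set α = a_1β_1 + ⋯ + a_nβ_n, and for a permutation τ ∈ 𝔖_n set α_τ = ∑_{i=1}^n a_i β_{τ(i)}. If τ is a transposition, then h(α_τ) ≤ 5·h(α) + log 5. -/

import Mathlib

open Polynomial

/-- The primitive integer minimal polynomial of an algebraic number `γ`. -/
noncomputable def intMinPoly (γ : ℂ) : Polynomial ℤ :=
  (IsLocalization.integerNormalization (nonZeroDivisors ℤ) (minpoly ℚ γ)).primPart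

/-- The Mahler measure `M(γ) = |a| ∏ max(1,|γᵢ|)`. -/
noncomputable def mahlerM (γ : ℂ) : ℝ :=
  ((intMinPoly γ).leadingCoeff.natAbs : ℝ) *
    (((minpoly ℚ γ).aroots ℂ).map (fun z => max 1 ‖z‖)).prod

/-- The logarithmic Weil height `h(γ) = log M(γ) / deg γ`. -/
noncomputable def heightH (γ : ℂ) : ℝ :=
  Real.log (mahlerM γ) / (minpoly ℚ γ).natDegree

/-- The image of the permutation representation of the Galois group of the splitting
field on the roots `B 0, …, B (n-1)`. -/
def galoisImage (n : ℕ) (B : Fin n → ℂ) : Set (Equiv.Perm (Fin n)) :=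
  {τ | ∃ σ : ℂ ≃ₐ[ℚ] ℂ, ∀ i, σ (B i) = B (τ i)}

open Equiv Finset Real

/-!
For distinct `i, j, k, l, m`, the group ring `ℤ[𝔖ₙ]` contains the identity
`(i j) = (i k)(j l) + (i m)(m j) + (m j)(i m) - (i k)(j m) - (i m)(j l)`,
which writes a transposition as a signed sum of five even permutations; this is where `n ≥ 5`
and the `5` of the bound come from. As the Galois group is `𝔄ₙ`, each of the five is induced by an
automorphism `gₜ` of the splitting field `K`, so `α_τ = ∑ ±gₜ(α)`.

For `x ∈ K` the conjugates of `x` are its images under `Gal(K/ℚ)`, each hit equally often, so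
`h(x)` is at least the mean of `log⁺ |g x|` over `g ∈ Gal(K/ℚ)`, with equality when `x` is an
algebraic integer (then the leading coefficient in the Mahler measure is `1`). Applying
`log⁺ |∑ ±wₜ| ≤ log 5 + ∑ log⁺ |wₜ|` to `g α_τ = ∑ ±(g gₜ)(α)` and averaging over `g` gives
`h(α_τ) ≤ 5 h(α) + log 5`.
-/

theorem MulAction.sum_comp_smul {G X M : Type*} [Group G] [Fintype G] [MulAction G X]
    [DecidableEq X] [AddCommMonoid M] (x : X) (f : X → M) :
    ∑ g : G, f (g • x) = #{g : G | g • x = x} • ∑ y ∈ univ.image (fun g : G => g • x), f y := by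
  rw [Finset.sum_comp, smul_sum]
  refine sum_congr rfl fun y hy => ?_
  obtain ⟨g₀, -, rfl⟩ := mem_image.mp hy
  congr 1
  refine card_nbij' (g₀⁻¹ * ·) (g₀ * ·) ?_ ?_ ?_ ?_ <;> intro g hg <;>
    simp_all [mul_smul]

section Galois

variable {F E : Type*} [Field F] [Field E] [Algebra F E] [FiniteDimensional F E] [IsGalois F E]

theorem aroots_minpoly_eq_image_algEquiv [DecidableEq E] (x : E) :
    (minpoly F x).aroots E = (univ.image fun g : Gal(E/F) => g x).val := by
  have hx : IsIntegral F x := .of_finite F x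
  refine (Multiset.Nodup.ext (nodup_roots (Separable.map (Algebra.IsSeparable.isSeparable F x)))
    (Finset.nodup _)).mpr fun y => ?_
  rw [mem_aroots, Finset.mem_val, Finset.mem_image]
  simp only [Finset.mem_univ, true_and]
  constructor
  · rintro ⟨-, hy⟩
    exact (Normal.minpoly_eq_iff_mem_orbit E).mp
      (minpoly.eq_of_irreducible_of_monic (minpoly.irreducible hx) hy (minpoly.monic hx)).symm
  · rintro ⟨g, rfl⟩
    exact ⟨minpoly.ne_zero hx, by rw [← minpoly.algEquiv_eq g x]; exact minpoly.aeval F _⟩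

theorem card_nsmul_sum_aroots_minpoly {Ω M : Type*} [Field Ω] [Algebra F Ω] [Algebra E Ω]
    [IsScalarTower F E Ω] [AddCommMonoid M] (x : E) (f : Ω → M) :
    Fintype.card Gal(E/F) • (((minpoly F x).aroots Ω).map f).sum =
      (minpoly F x).natDegree • ∑ g : Gal(E/F), f (algebraMap E Ω (g x)) := by
  classical
  have hsplit := Normal.splits (F := F) inferInstance x
  have horbit := aroots_minpoly_eq_image_algEquiv (F := F) x
  have hdeg : (minpoly F x).natDegree = #(univ.image fun g : Gal(E/F) => g • x) := by
    rw [← natDegree_map (algebraMap F E), hsplit.natDegree_eq_card_roots]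
    exact congrArg Multiset.card horbit
  have hcard := MulAction.sum_comp_smul (G := Gal(E/F)) x fun _ => 1
  simp only [sum_const, card_univ, smul_eq_mul, mul_one] at hcard
  rw [← hsplit.map_aroots_algebraMap, horbit, Multiset.map_map]
  simp_rw [← AlgEquiv.smul_def]
  rw [MulAction.sum_comp_smul x fun y => f (algebraMap E Ω y), hcard, hdeg, mul_comm, mul_nsmul,
    smul_comm]
  rfl

end Galois

theorem natAbs_leadingCoeff_intMinPoly {γ : ℂ} (hγ : IsIntegral ℤ γ) :
    (intMinPoly γ).leadingCoeff.natAbs = 1 := by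
  obtain ⟨c, hc0, hc⟩ := IsLocalization.integerNormalization_spec (nonZeroDivisors ℤ)
    (minpoly ℚ γ)
  have hN : IsLocalization.integerNormalization (nonZeroDivisors ℤ) (minpoly ℚ γ) =
      C c * minpoly ℤ γ := by
    refine map_injective (algebraMap ℤ ℚ) (IsFractionRing.injective ℤ ℚ) ?_
    rw [hc, minpoly.isIntegrallyClosed_eq_field_fractions' ℚ hγ, Polynomial.map_mul, map_C,
      Algebra.smul_def]
    rfl
  have hmonic := minpoly.monic hγ
  obtain ⟨u, hu, hCu⟩ := Polynomial.isUnit_iff.mp (isUnit_primPart_C c)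
  rw [intMinPoly, hN, primPart_mul (mul_ne_zero (C_ne_zero.mpr (nonZeroDivisors.ne_zero hc0))
    hmonic.ne_zero), hmonic.isPrimitive.primPart_eq, ← hCu, leadingCoeff_mul, leadingCoeff_C,
    hmonic.leadingCoeff, mul_one]
  exact Int.isUnit_iff_natAbs_eq.mp hu

theorem log_mahlerM (γ : ℂ) :
    log (mahlerM γ) = log ((intMinPoly γ).leadingCoeff.natAbs) +
      (((minpoly ℚ γ).aroots ℂ).map fun z => log⁺ ‖z‖).sum := by
  have hlead : (intMinPoly γ).leadingCoeff.natAbs ≠ 0 := by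
    simpa [intMinPoly] using primPart_ne_zero _
  have hpos : ∀ w ∈ ((minpoly ℚ γ).aroots ℂ).map (fun z => max 1 ‖z‖), 0 < w := by
    simp only [Multiset.mem_map]
    rintro _ ⟨z, -, rfl⟩
    positivity
  rw [mahlerM, log_mul (by exact_mod_cast hlead) (Multiset.prod_pos hpos).ne',
    log_multiset_prod fun w hw => (hpos w hw).ne', Multiset.map_map]
  congr 2
  exact Multiset.map_congr rfl fun z _ => (posLog_eq_log_max_one (norm_nonneg z)).symm

theorem isIntegral_of_mem_aroots_minpoly {S : Type*} [CommRing S] [IsDomain S] [Algebra ℚ S]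
    {b z : S} (hb : IsIntegral ℤ b) (hz : z ∈ (minpoly ℚ b).aroots S) : IsIntegral ℤ z := by
  rw [mem_aroots, minpoly.isIntegrallyClosed_eq_field_fractions' ℚ hb, aeval_map_algebraMap] at hz
  exact ⟨minpoly ℤ b, minpoly.monic hb, hz.2⟩

section Height

variable {E : Type*} [Field E] [Algebra ℚ E] [FiniteDimensional ℚ E] [IsGalois ℚ E]
  [Algebra E ℂ] [IsScalarTower ℚ E ℂ]

theorem heightH_algebraMap (x : E) :
    heightH (algebraMap E ℂ x) =
      log ((intMinPoly (algebraMap E ℂ x)).leadingCoeff.natAbs) / (minpoly ℚ x).natDegree +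
        (∑ g : Gal(E/ℚ), log⁺ ‖algebraMap E ℂ (g x)‖) / Fintype.card Gal(E/ℚ) := by
  have hdeg : (0 : ℝ) < (minpoly ℚ x).natDegree :=
    Nat.cast_pos.mpr (minpoly.natDegree_pos (.of_finite ℚ x))
  have hcard : (0 : ℝ) < Fintype.card Gal(E/ℚ) := Nat.cast_pos.mpr Fintype.card_pos
  have hsum := card_nsmul_sum_aroots_minpoly (F := ℚ) (Ω := ℂ) x fun z => log⁺ ‖z‖
  rw [nsmul_eq_mul, nsmul_eq_mul] at hsum
  rw [heightH, log_mahlerM, add_div, minpoly.algebraMap_eq (algebraMap E ℂ).injective]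
  congr 1
  rw [div_eq_div_iff hdeg.ne' hcard.ne']
  linarith

theorem heightH_algebraMap_of_isIntegral {x : E} (hx : IsIntegral ℤ (algebraMap E ℂ x)) :
    heightH (algebraMap E ℂ x) =
      (∑ g : Gal(E/ℚ), log⁺ ‖algebraMap E ℂ (g x)‖) / Fintype.card Gal(E/ℚ) := by
  rw [heightH_algebraMap, natAbs_leadingCoeff_intMinPoly hx]
  simp

theorem sum_posLog_div_card_le_heightH_algebraMap (x : E) :
    (∑ g : Gal(E/ℚ), log⁺ ‖algebraMap E ℂ (g x)‖) / Fintype.card Gal(E/ℚ) ≤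
      heightH (algebraMap E ℂ x) := by
  rw [heightH_algebraMap]
  exact le_add_of_nonneg_left (div_nonneg (log_natCast_nonneg _) (Nat.cast_nonneg _))

theorem heightH_le_of_eq_sum_zsmul {ι : Type*} [Fintype ι] {x y : E}
    (hy : IsIntegral ℤ (algebraMap E ℂ y)) (g : ι → Gal(E/ℚ)) (c : ι → ℤ)
    (hc : ∀ t, |c t| ≤ 1) (hyx : y = ∑ t, c t • g t x) :
    heightH (algebraMap E ℂ y) ≤
      Fintype.card ι * heightH (algebraMap E ℂ x) + log (Fintype.card ι) := by
  set φ := algebraMap E ℂ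
  have hterm : ∀ h : Gal(E/ℚ), log⁺ ‖φ (h y)‖ ≤
      log (Fintype.card ι) + ∑ t, log⁺ ‖φ ((h * g t) x)‖ := fun h => calc
    log⁺ ‖φ (h y)‖ = log⁺ ‖∑ t, c t • φ ((h * g t) x)‖ := by
      simp [hyx, map_sum]
    _ ≤ log (Fintype.card ι) + ∑ t, log⁺ ‖c t • φ ((h * g t) x)‖ := posLog_norm_sum_le _ _
    _ ≤ _ := by
      gcongr with t
      rw [zsmul_eq_mul, norm_mul, Complex.norm_intCast]
      exact mul_le_of_le_one_left (norm_nonneg _) (by exact_mod_cast hc t)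
  have hshift : ∀ t, ∑ h : Gal(E/ℚ), log⁺ ‖φ ((h * g t) x)‖ = ∑ h : Gal(E/ℚ), log⁺ ‖φ (h x)‖ :=
    fun t => Fintype.sum_equiv (Equiv.mulRight (g t)) _ _ fun _ => rfl
  have hsum : ∑ h : Gal(E/ℚ), log⁺ ‖φ (h y)‖ ≤ Fintype.card Gal(E/ℚ) * log (Fintype.card ι) +
      Fintype.card ι * ∑ h : Gal(E/ℚ), log⁺ ‖φ (h x)‖ := by
    refine (sum_le_sum fun h _ => hterm h).trans_eq ?_
    rw [sum_add_distrib, sum_comm, sum_congr rfl fun t _ => hshift t]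
    simp
  have hcard : (0 : ℝ) < Fintype.card Gal(E/ℚ) := Nat.cast_pos.mpr Fintype.card_pos
  calc heightH (φ y) = (∑ h : Gal(E/ℚ), log⁺ ‖φ (h y)‖) / Fintype.card Gal(E/ℚ) :=
        heightH_algebraMap_of_isIntegral hy
    _ ≤ (Fintype.card Gal(E/ℚ) * log (Fintype.card ι) +
          Fintype.card ι * ∑ h : Gal(E/ℚ), log⁺ ‖φ (h x)‖) / Fintype.card Gal(E/ℚ) :=
        div_le_div_of_nonneg_right hsum hcard.le
    _ = Fintype.card ι * ((∑ h : Gal(E/ℚ), log⁺ ‖φ (h x)‖) / Fintype.card Gal(E/ℚ)) +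
          log (Fintype.card ι) := by
        field_simp
        ring
    _ ≤ Fintype.card ι * heightH (φ x) + log (Fintype.card ι) := by
        gcongr
        exact sum_posLog_div_card_le_heightH_algebraMap x

end Height

section SwapExpansion

variable {α : Type*} [DecidableEq α]

def swapExpansion (i j k l m : α) : Fin 5 → Perm α :=
  ![swap i k * swap j l, swap i m * swap m j, swap m j * swap i m, swap i k * swap j m,
    swap i m * swap j l]

def swapExpansionCoeff : Fin 5 → ℤ := ![1, 1, 1, -1, -1]

theorem abs_swapExpansionCoeff_le_one (t : Fin 5) : |swapExpansionCoeff t| ≤ 1 := by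
  fin_cases t <;> simp [swapExpansionCoeff]

theorem sign_swapExpansion [Fintype α] {i j k l m : α} (h : [i, j, k, l, m].Nodup) (t : Fin 5) :
    Perm.sign (swapExpansion i j k l m t) = 1 := by
  simp only [List.nodup_cons, List.mem_cons, List.not_mem_nil, or_false, not_or] at h
  obtain ⟨⟨hij, hik, hil, him⟩, ⟨hjk, hjl, hjm⟩, ⟨hkl, hkm⟩, hlm, -⟩ := h
  fin_cases t <;> simp [swapExpansion, *, Ne.symm hjm]

theorem apply_swap_eq_sum_swapExpansion {M : Type*} [AddCommGroup M] (f : α → M)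
    {i j k l m : α} (h : [i, j, k, l, m].Nodup) (x : α) :
    f (swap i j x) = ∑ t, swapExpansionCoeff t • f (swapExpansion i j k l m t x) := by
  simp only [List.nodup_cons, List.mem_cons, List.not_mem_nil, or_false, not_or] at h
  obtain ⟨⟨hij, hik, hil, him⟩, ⟨hjk, hjl, hjm⟩, ⟨hkl, hkm⟩, hlm, -⟩ := h
  simp only [swapExpansionCoeff, swapExpansion, Fin.sum_univ_five, Matrix.cons_val_zero,
    Matrix.cons_val_one, Matrix.cons_val, Perm.coe_mul, Function.comp_apply, one_smul, neg_smul,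
    swap_apply_def]
  split_ifs <;> subst_vars <;> (try simp_all) <;> abel

theorem exists_nodup_of_five_le_card [Fintype α] (h : 5 ≤ Fintype.card α) {i j : α} (hij : i ≠ j) :
    ∃ k l m : α, [i, j, k, l, m].Nodup := by
  have : 2 < #({i, j}ᶜ : Finset α) := by
    rw [card_compl, card_pair hij]; omega
  obtain ⟨k, l, m, hk, hl, hm, hkl, hkm, hlm⟩ := two_lt_card_iff.mp this
  simp only [mem_compl, mem_insert, mem_singleton, not_or] at hk hl hm
  refine ⟨k, l, m, ?_⟩
  simp [*, Ne.symm hk.1, Ne.symm hk.2, Ne.symm hl.1, Ne.symm hl.2, Ne.symm hm.1, Ne.symm hm.2]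

end SwapExpansion

theorem exists_algEquiv_apply_eq_of_mem_galoisImage {n : ℕ} {B : Fin n → ℂ}
    (K : IntermediateField ℚ ℂ) [Normal ℚ K] (hB : ∀ i, B i ∈ K) {σ : Perm (Fin n)}
    (hσ : σ ∈ galoisImage n B) : ∃ g : Gal(K/ℚ), ∀ i, g ⟨B i, hB i⟩ = ⟨B (σ i), hB (σ i)⟩ := by
  obtain ⟨ρ, hρ⟩ := hσ
  exact ⟨ρ.restrictNormal K, fun i => Subtype.ext ((ρ.restrictNormal_commutes K _).trans (hρ i))⟩

theorem stmt_17_general (n : ℕ) (hn : 5 ≤ n) (b : ℂ) (B : Fin n → ℂ)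
    (hbint : IsIntegral ℤ b)
    (hroots : (minpoly ℚ b).aroots ℂ = Multiset.map B Finset.univ.val)
    (hgal : galoisImage n B = (alternatingGroup (Fin n) : Set (Equiv.Perm (Fin n))))
    (a : Fin n → ℤ) (α : ℂ) (hα : α = ∑ i, (a i : ℂ) * B i)
    (τ : Equiv.Perm (Fin n)) (hτ : τ.IsSwap) :
    heightH (∑ i, (a i : ℂ) * B (τ i)) ≤ 5 * heightH α + Real.log 5 := by
  obtain ⟨i, j, hij, rfl⟩ := hτ
  obtain ⟨k, l, m, hnodup⟩ := exists_nodup_of_five_le_card (by simpa using hn) hij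
  have hB : ∀ i, B i ∈ (minpoly ℚ b).aroots ℂ := fun i => hroots ▸ by simp
  let K := IntermediateField.adjoin ℚ ((minpoly ℚ b).rootSet ℂ)
  have : IsSplittingField ℚ K (minpoly ℚ b) :=
    IntermediateField.adjoin_rootSet_isSplittingField (IsAlgClosed.splits _)
  have : FiniteDimensional ℚ K := IsSplittingField.finiteDimensional K (minpoly ℚ b)
  have : IsGalois ℚ K :=
    IsGalois.of_separable_splitting_field (minpoly.irreducible hbint.tower_top).separable
  have hBK : ∀ i, B i ∈ K := fun i => IntermediateField.subset_adjoin ℚ _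
    (mem_rootSet.mpr (mem_aroots.mp (hB i)))
  let β : Fin n → K := fun i => ⟨B i, hBK i⟩
  choose g hg using fun t => exists_algEquiv_apply_eq_of_mem_galoisImage K hBK
    (σ := swapExpansion i j k l m t) (by rw [hgal]; exact sign_swapExpansion hnodup t)
  have key := heightH_le_of_eq_sum_zsmul (x := ∑ x, (a x : K) * β x)
    (y := ∑ x, (a x : K) * β (swap i j x)) ?_ g swapExpansionCoeff
    abs_swapExpansionCoeff_le_one ?_
  · simpa [hα, β] using key
  · simp only [map_sum, map_mul, map_intCast]
    exact IsIntegral.sum _ fun x _ =>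
      isIntegral_algebraMap.mul (isIntegral_of_mem_aroots_minpoly hbint (hB _))
  · simp only [map_sum, map_mul, map_intCast, β, hg, apply_swap_eq_sum_swapExpansion β hnodup,
      mul_sum, mul_smul_comm, smul_sum]
    exact sum_comm

/-- Let `β` be an algebraic integer of degree `n ≥ 5` with conjugates
`Bᵢ` and Galois group `𝔄ₙ`.  Let `α = ∑ aᵢBᵢ` and, for `τ ∈ 𝔖ₙ`,
`α_τ = ∑ aᵢB_{τ(i)}`.  If `τ` is a transposition, then `h(α_τ) ≤ 5h(α) + log 5`. -/
theorem stmt_17 (n : ℕ) (hn : 5 ≤ n) (b : ℂ) (B : Fin n → ℂ)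
    (hbint : IsIntegral ℤ b)
    (hdeg : (minpoly ℚ b).natDegree = n)
    (hroots : (minpoly ℚ b).aroots ℂ = Multiset.map B Finset.univ.val)
    (hgal : galoisImage n B = (alternatingGroup (Fin n) : Set (Equiv.Perm (Fin n))))
    (a : Fin n → ℤ) (α : ℂ) (hα : α = ∑ i, (a i : ℂ) * B i)
    (τ : Equiv.Perm (Fin n)) (hτ : τ.IsSwap) :
    heightH (∑ i, (a i : ℂ) * B (τ i)) ≤ 5 * heightH α + Real.log 5 :=
  stmt_17_general n hn b B hbint hroots hgal a α hα τ hτ
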